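/- For every 2-coloring ℕ = A₁ ∪ A₂, either (A₁ − A₁) ∪ (A₂ − A₂) ⊇ ℕ, or there exists d ∈ ℕ such that dℕ ⊆ (A₁ − A₁) ∩ (A₂ − A₂). In particular, (A₁ − A₁) ∪ (A₂ − A₂) is a Bohr₀ set. -/

import Mathlib

open Function Metric Set Filter

noncomputable section

abbrev Torus := AddCircle (1 : ℝ)

/-- `A ⊆ ℕ` is a Bohr₀ set: it contains all positive `n` with `‖nα‖ < δ`
for some `δ > 0`, `d ∈ ℕ`, `α ∈ 𝕋^d` (L¹ distance to zero). -/
def IsBohr0 (A : Set ℕ) : Prop :=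
  ∃ (d : ℕ) (α : Fin d → Torus) (δ : ℝ), 0 < δ ∧
    ∀ n : ℕ, 0 < n → (∑ i, ‖n • α i‖) < δ → n ∈ A


/-- The set of positive pairwise differences of `A ⊆ ℕ`. -/
def diffSet (A : Set ℕ) : Set ℕ := {n : ℕ | ∃ a ∈ A, ∃ b ∈ A, b < a ∧ a = b + n}

lemma aux_key (A B : Set ℕ) (d : ℕ) (hd : 0 < d) (m : ℕ) (hm : m ∈ A)
    (stepAB : ∀ a ∈ A, a + d ∈ B) (stepBA : ∀ b ∈ B, b + d ∈ A) :
    ∀ n : ℕ, 0 < n → (2 * d) * n ∈ diffSet A ∩ diffSet B := by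
  have hchain : ∀ k : ℕ, m + 2 * d * k ∈ A ∧ m + d + 2 * d * k ∈ B := by
    intro k
    induction k with
    | zero => simpa using ⟨hm, stepAB m hm⟩
    | succ k ih =>
      have h1 : m + 2 * d * (k + 1) ∈ A := by
        have := stepBA _ ih.2
        have e : m + d + 2 * d * k + d = m + 2 * d * (k + 1) := by ring
        rwa [e] at this
      refine ⟨h1, ?_⟩
      have := stepAB _ h1
      have e : m + 2 * d * (k + 1) + d = m + d + 2 * d * (k + 1) := by ring
      rwa [e] at this
  intro n hn
  constructor
  · exact ⟨m + 2 * d * n, (hchain n).1, m, hm, by nlinarith, by ring⟩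
  · exact ⟨m + d + 2 * d * n, (hchain n).2, m + d, by simpa using (hchain 0).2,
      by nlinarith, by ring⟩

theorem two_coloring_katznelson (A₁ A₂ : Set ℕ)
    (hcov : ∀ n : ℕ, 0 < n → n ∈ A₁ ∪ A₂) :
    ((∀ n : ℕ, 0 < n → n ∈ diffSet A₁ ∪ diffSet A₂) ∨
      ∃ d : ℕ, 0 < d ∧ ∀ n : ℕ, 0 < n → d * n ∈ diffSet A₁ ∩ diffSet A₂) ∧
    IsBohr0 (diffSet A₁ ∪ diffSet A₂) := by
  have main : (∀ n : ℕ, 0 < n → n ∈ diffSet A₁ ∪ diffSet A₂) ∨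
      ∃ d : ℕ, 0 < d ∧ ∀ n : ℕ, 0 < n → d * n ∈ diffSet A₁ ∩ diffSet A₂ := by
    by_cases hall : ∀ n : ℕ, 0 < n → n ∈ diffSet A₁ ∪ diffSet A₂
    · exact Or.inl hall
    · right
      push_neg at hall
      obtain ⟨d, hd, hdmem⟩ := hall
      have hd1 : d ∉ diffSet A₁ := fun h => hdmem (Or.inl h)
      have hd2 : d ∉ diffSet A₂ := fun h => hdmem (Or.inr h)
      have step12 : ∀ a ∈ A₁, a + d ∈ A₂ := by
        intro a ha
        rcases hcov (a + d) (by omega) with h | h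
        · exact absurd ⟨a + d, h, a, ha, by omega, rfl⟩ hd1
        · exact h
      have step21 : ∀ a ∈ A₂, a + d ∈ A₁ := by
        intro a ha
        rcases hcov (a + d) (by omega) with h | h
        · exact h
        · exact absurd ⟨a + d, h, a, ha, by omega, rfl⟩ hd2
      refine ⟨2 * d, by omega, ?_⟩
      rcases hcov 1 one_pos with h1 | h1
      · exact aux_key A₁ A₂ d hd 1 h1 step12 step21
      · intro n hn
        have := aux_key A₂ A₁ d hd 1 h1 step21 step12 n hn
        exact ⟨this.2, this.1⟩
  refine ⟨main, ?_⟩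
  rcases main with h | ⟨d, hd, h⟩
  · exact ⟨0, Fin.elim0, 1, one_pos, fun n hn _ => h n hn⟩
  · refine ⟨1, fun _ => ((d : ℝ)⁻¹ : ℝ), (d : ℝ)⁻¹, by positivity, ?_⟩
    intro n hn hnorm
    rw [Fin.sum_univ_one] at hnorm
    have hcoe : (n : ℕ) • (((d : ℝ)⁻¹ : ℝ) : Torus) = ((n * (d : ℝ)⁻¹ : ℝ) : Torus) := by
      push_cast [← AddCircle.coe_nsmul]
      ring_nf
    rw [hcoe, UnitAddCircle.norm_eq] at hnorm
    -- show d ∣ n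
    have hdvd : d ∣ n := by
      by_contra hnd
      set r := n % d with hr
      have hr0 : 0 < r := Nat.pos_of_ne_zero (fun h => hnd (Nat.dvd_of_mod_eq_zero h))
      have hrd : r < d := Nat.mod_lt _ hd
      have hx : (n : ℝ) * (d : ℝ)⁻¹ = (n / d : ℕ) + (r : ℝ) / d := by
        have : (n : ℝ) = (d * (n / d) + r : ℕ) := by
          rw [Nat.div_add_mod]
        rw [this]
        push_cast
        field_simp
      rw [hx] at hnorm
      have hfr : Int.fract ((n / d : ℕ) + (r : ℝ) / d) = (r : ℝ) / d := by
        rw [Int.fract_natCast_add]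
        apply Int.fract_eq_self.2
        constructor
        · positivity
        · rw [div_lt_one (by positivity)]
          exact_mod_cast hrd
      rw [abs_sub_round_eq_min, hfr] at hnorm
      have h1 : (d : ℝ)⁻¹ ≤ (r : ℝ) / d := by
        rw [inv_eq_one_div]
        apply div_le_div_of_nonneg_right ?_ (by positivity)
        · exact_mod_cast hr0
      have h2 : (d : ℝ)⁻¹ ≤ 1 - (r : ℝ) / d := by
        have : (r : ℝ) / d ≤ ((d : ℝ) - 1) / d := by
          apply div_le_div_of_nonneg_right ?_ (by positivity)
          have : (r : ℝ) ≤ (d : ℝ) - 1 := by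
            have : (r : ℝ) + 1 ≤ (d : ℝ) := by exact_mod_cast hrd
            linarith
          exact this
        have hd' : (0 : ℝ) < d := by exact_mod_cast hd
        rw [sub_div, div_self hd'.ne'] at this
        rw [inv_eq_one_div]
        linarith
      rcases min_le_iff.1 (le_of_lt hnorm) with hle | hle <;> linarith [lt_of_le_of_lt (le_min h1 h2) hnorm, min_le_left ((r:ℝ)/d) (1 - (r:ℝ)/d)]
    obtain ⟨m, rfl⟩ := hdvd
    have hm : 0 < m := by
      rcases Nat.eq_zero_or_pos m with h0 | h0
      · simp [h0] at hn
      · exact h0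
    exact Or.inl (h m hm).1
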